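/- arXiv:2103.06475 — 3 statements merged into one kernel-verified Lean document; each statement's English description precedes it below -/
import Mathlib

section
/- Let V be a vector space over an algebraically closed field k of characteristic 0 with a fixed basis B, and let c : V ⊗ V → V ⊗ V be a linear map satisfying the braid equation (c⊗id)(id⊗c)(c⊗id) = (id⊗c)(c⊗id)(id⊗c). Suppose that for every x ∈ B there is a bijection f_x : B → B and nonzero scalars q_{x,y} such that c(x ⊗ y) = q_{x,y} · f_x(y) ⊗ x for all x, y ∈ B. Then the operation x ▷ y := f_x(y) makes B a rack, i.e., x ▷ (y ▷ z) = (x ▷ y) ▷ (x ▷ z) for all x, y, z ∈ B, and each map y ↦ x ▷ y is bijective. -/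
/-!
Evaluate both sides of the braid equation on a basis tensor `x ⊗ y ⊗ z`. Each of the three
factors `c ⊗ id`, `id ⊗ c` sends a basis tensor to a nonzero multiple of a basis tensor, so
the two sides become `λ • (f (f x y) (f x z) ⊗ f x y ⊗ x)` and `μ • (f x (f y z) ⊗ f x y ⊗ x)`
with `λ, μ` products of the `q`'s, hence nonzero. Linear independence of the basis tensors of
`V ⊗ V ⊗ V` forces the first factors to agree, which is self-distributivity.
-/

open TensorProduct

section

variable {K V : Type*} [Field K] [AddCommGroup V] [Module K V]

noncomputable def onFirstTwo (c : V ⊗[K] V →ₗ[K] V ⊗[K] V) :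
    V ⊗[K] (V ⊗[K] V) →ₗ[K] V ⊗[K] (V ⊗[K] V) :=
  ((TensorProduct.assoc K V V V).toLinearMap.comp (LinearMap.rTensor V c)).comp
    (TensorProduct.assoc K V V V).symm.toLinearMap

theorem onFirstTwo_tmul (c : V ⊗[K] V →ₗ[K] V ⊗[K] V) (u v w : V) :
    onFirstTwo c (u ⊗ₜ[K] (v ⊗ₜ[K] w)) = TensorProduct.assoc K V V V (c (u ⊗ₜ v) ⊗ₜ w) := by
  simp [onFirstTwo]

variable {B : Type*} (bas : Module.Basis B K V)

theorem eq_of_smul_basis_tmul_eq {a b : K} (ha : a ≠ 0) {i i' j k : B}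
    (h : a • (bas i ⊗ₜ[K] (bas j ⊗ₜ[K] bas k)) = b • (bas i' ⊗ₜ[K] (bas j ⊗ₜ[K] bas k))) :
    i = i' := by
  have hT := (bas.tensorProduct (bas.tensorProduct bas)).linearIndependent
  simp only [← Module.Basis.tensorProduct_apply] at h
  exact congrArg Prod.fst (hT.eq_of_smul_apply_eq_smul_apply a b _ _ ha h)

variable {c : V ⊗[K] V →ₗ[K] V ⊗[K] V} {f : B → B → B} {q : B → B → K}
  (hc : ∀ x y, c (bas x ⊗ₜ[K] bas y) = q x y • (bas (f x y) ⊗ₜ[K] bas x))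
include hc

theorem onFirstTwo_basis_tmul (x y z : B) :
    onFirstTwo c (bas x ⊗ₜ[K] (bas y ⊗ₜ[K] bas z)) =
      q x y • (bas (f x y) ⊗ₜ[K] (bas x ⊗ₜ[K] bas z)) := by
  rw [onFirstTwo_tmul, hc, ← smul_tmul', map_smul, assoc_tmul]

theorem lTensor_basis_tmul (x y z : B) :
    LinearMap.lTensor V c (bas x ⊗ₜ[K] (bas y ⊗ₜ[K] bas z)) =
      q y z • (bas x ⊗ₜ[K] (bas (f y z) ⊗ₜ[K] bas y)) := by
  rw [LinearMap.lTensor_tmul, hc, tmul_smul]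

end

theorem rack_from_braiding_general {K V B : Type*} [Field K]
    [AddCommGroup V] [Module K V] (bas : Module.Basis B K V)
    (c : V ⊗[K] V →ₗ[K] V ⊗[K] V)
    (hbraid :
      letI α := TensorProduct.assoc K V V V
      letI c₁ : V ⊗[K] (V ⊗[K] V) →ₗ[K] V ⊗[K] (V ⊗[K] V) :=
        (α.toLinearMap.comp (LinearMap.rTensor V c)).comp α.symm.toLinearMap
      letI c₂ : V ⊗[K] (V ⊗[K] V) →ₗ[K] V ⊗[K] (V ⊗[K] V) := LinearMap.lTensor V c
      c₁.comp (c₂.comp c₁) = c₂.comp (c₁.comp c₂))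
    (f : B → B → B) (hf : ∀ x, Function.Bijective (f x))
    (q : B → B → K) (hq : ∀ x y, q x y ≠ 0)
    (hc : ∀ x y, c (bas x ⊗ₜ[K] bas y) = q x y • (bas (f x y) ⊗ₜ[K] bas x)) :
    (∀ x y z : B, f x (f y z) = f (f x y) (f x z)) ∧ (∀ x, Function.Bijective (f x)) := by
  refine ⟨fun x y z => ?_, hf⟩
  have h := LinearMap.congr_fun hbraid (bas x ⊗ₜ[K] (bas y ⊗ₜ[K] bas z))
  change onFirstTwo c (LinearMap.lTensor V c (onFirstTwo c _)) =
    LinearMap.lTensor V c (onFirstTwo c (LinearMap.lTensor V c _)) at h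
  simp only [onFirstTwo_basis_tmul bas hc, lTensor_basis_tmul bas hc, map_smul, smul_smul] at h
  exact (eq_of_smul_basis_tmul_eq bas (by simp [hq]) h).symm

/-- The rack lemma: a braiding of the form `c(x ⊗ y) = q_{x,y} · f_x(y) ⊗ x` on a basis
induces a rack structure `x ▷ y = f_x(y)` on the basis. -/
theorem rack_from_braiding {K V B : Type*} [Field K] [IsAlgClosed K] [CharZero K]
    [AddCommGroup V] [Module K V] (bas : Module.Basis B K V)
    (c : V ⊗[K] V →ₗ[K] V ⊗[K] V)
    (hbraid :
      letI α := TensorProduct.assoc K V V V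
      letI c₁ : V ⊗[K] (V ⊗[K] V) →ₗ[K] V ⊗[K] (V ⊗[K] V) :=
        (α.toLinearMap.comp (LinearMap.rTensor V c)).comp α.symm.toLinearMap
      letI c₂ : V ⊗[K] (V ⊗[K] V) →ₗ[K] V ⊗[K] (V ⊗[K] V) := LinearMap.lTensor V c
      c₁.comp (c₂.comp c₁) = c₂.comp (c₁.comp c₂))
    (f : B → B → B) (hf : ∀ x, Function.Bijective (f x))
    (q : B → B → K) (hq : ∀ x y, q x y ≠ 0)
    (hc : ∀ x y, c (bas x ⊗ₜ[K] bas y) = q x y • (bas (f x y) ⊗ₜ[K] bas x)) :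
    (∀ x y z : B, f x (f y z) = f (f x y) (f x z)) ∧ (∀ x, Function.Bijective (f x)) :=
  rack_from_braiding_general bas c hbraid f hf q hq hc
end

section
/- Let λ ∈ {1, −1}, p ∈ {0,1}, and let k be an algebraically closed field of characteristic 0. Consider the associative k-algebra A generated by w₁, w₂, w₃ subject to the relations w₁² + (−1)^p w₂w₃ + (−1)^p w₃w₂ = 0, w₂² = 0, w₁w₂ + λ(−1)^p w₃² + w₂w₁ = 0, w₁w₃ = 0, w₃w₁ = 0. Then in A the following hold: w₁³ = (−1)^{p+1} w₁w₂w₃ = (−1)^{p+1} w₃w₂w₁ = λ w₃³, w₁²w₂ = (−1)^{p+1} w₂w₃w₂ = w₂w₁² = −w₁w₂w₁, and w₂w₃² = −w₃w₂w₃ = w₃²w₂ = λ(−1)^{p+1} w₂w₁w₂. -/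
/-- Defining relations of the 12-dimensional Nichols algebra `B(𝒩_{k,pq}^s)`
(n = 1, μ = 1, k = 0, q = 1): with `ε = (−1)^p` and `l = λ`,
`w₁² + ε w₂w₃ + ε w₃w₂ = 0`, `w₂² = 0`, `w₁w₂ + lε w₃² + w₂w₁ = 0`,
`w₁w₃ = 0`, `w₃w₁ = 0`. -/
inductive NicholsNRel (K : Type*) [Field K] (l ε : K) :
    FreeAlgebra K (Fin 3) → FreeAlgebra K (Fin 3) → Prop
  | r1 : NicholsNRel K l ε
      (FreeAlgebra.ι K 0 * FreeAlgebra.ι K 0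
        + ε • (FreeAlgebra.ι K 1 * FreeAlgebra.ι K 2)
        + ε • (FreeAlgebra.ι K 2 * FreeAlgebra.ι K 1)) 0
  | r2 : NicholsNRel K l ε (FreeAlgebra.ι K 1 * FreeAlgebra.ι K 1) 0
  | r3 : NicholsNRel K l ε
      (FreeAlgebra.ι K 0 * FreeAlgebra.ι K 1
        + (l * ε) • (FreeAlgebra.ι K 2 * FreeAlgebra.ι K 2)
        + FreeAlgebra.ι K 1 * FreeAlgebra.ι K 0) 0
  | r4 : NicholsNRel K l ε (FreeAlgebra.ι K 0 * FreeAlgebra.ι K 2) 0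
  | r5 : NicholsNRel K l ε (FreeAlgebra.ι K 2 * FreeAlgebra.ι K 0) 0


private lemma nichols_aux {K R : Type*} [CommRing K] [Ring R] [Algebra K R]
    (ε l : K) (hε : ε * ε = 1) (hl : l * l = 1) (a b c : R)
    (h1 : a * a + ε • (b * c) + ε • (c * b) = 0)
    (h2 : b * b = 0)
    (h3 : a * b + (l * ε) • (c * c) + b * a = 0)
    (h4 : a * c = 0) (h5 : c * a = 0) :
    (a ^ 3 = (-ε) • (a * b * c) ∧
     (-ε) • (a * b * c) = (-ε) • (c * b * a) ∧
     (-ε) • (c * b * a) = l • (c ^ 3)) ∧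
    (a ^ 2 * b = (-ε) • (b * c * b) ∧
     (-ε) • (b * c * b) = b * a ^ 2 ∧
     b * a ^ 2 = -(a * b * a)) ∧
    (b * c ^ 2 = -(c * b * c) ∧
     -(c * b * c) = c ^ 2 * b ∧
     c ^ 2 * b = (l * -ε) • (b * a * b)) := by
  have hεz : ∀ x : R, ε • x = 0 → x = 0 := fun x hx => by
    have : ε • (ε • x) = 0 := by rw [hx, smul_zero]
    rwa [smul_smul, hε, one_smul] at this
  -- rearranged relations
  have h1' : a * a = -(ε • (b * c)) - ε • (c * b) := by
    have h := h1
    rw [add_assoc] at h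
    rw [eq_neg_of_add_eq_zero_left h, neg_add, ← sub_eq_add_neg]
  have h3' : a * b = -((l * ε) • (c * c)) - b * a := by
    have h := h3
    rw [add_assoc] at h
    rw [eq_neg_of_add_eq_zero_left h, neg_add, ← sub_eq_add_neg]
  have h3'' : b * a = -(a * b) - (l * ε) • (c * c) := by
    rw [h3']; abel
  -- monomial values
  have m1 : a * (b * c) = -((l * ε) • (c * (c * c))) := by
    rw [← mul_assoc, h3', sub_mul, neg_mul, smul_mul_assoc, mul_assoc,
      mul_assoc, h4, mul_zero, sub_zero]
  have m2 : c * (b * a) = -((l * ε) • (c * (c * c))) := by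
    rw [h3'', mul_sub, mul_neg, ← mul_assoc, h5, zero_mul, neg_zero,
      zero_sub, mul_smul_comm]
  have m3 : b * (a * b) = -((l * ε) • (b * (c * c))) := by
    have hb : b * (b * a) = 0 := by rw [← mul_assoc, h2, zero_mul]
    rw [h3', mul_sub, mul_neg, mul_smul_comm, hb, sub_zero]
  -- group 1
  have g1a : a ^ 3 = (-ε) • (a * b * c) := by
    have : a ^ 3 = a * (a * a) := by rw [pow_succ, pow_two, mul_assoc]
    rw [this, h1', mul_sub, mul_neg, mul_smul_comm, mul_smul_comm,
      ← mul_assoc a c b, h4, zero_mul, smul_zero, sub_zero, ← neg_smul,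
      mul_assoc]
  have g1b : (-ε) • (a * b * c) = (-ε) • (c * b * a) := by
    rw [mul_assoc, m1, mul_assoc c b a, m2]
  have g1c : (-ε) • (c * b * a) = l • (c ^ 3) := by
    rw [mul_assoc c b a, m2, smul_neg, ← neg_smul, neg_neg, smul_smul]
    have : ε * (l * ε) = l := by linear_combination l * hε
    rw [this]
    congr 1
    rw [pow_succ, pow_two, mul_assoc]
  -- group 2
  have g2a : a ^ 2 * b = (-ε) • (b * c * b) := by
    rw [pow_two, h1', sub_mul, neg_mul, smul_mul_assoc, smul_mul_assoc,
      mul_assoc c b b, h2, mul_zero, smul_zero, sub_zero, ← neg_smul]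
  have g2b : (-ε) • (b * c * b) = b * a ^ 2 := by
    rw [pow_two, h1', mul_sub, mul_neg, mul_smul_comm, mul_smul_comm,
      ← mul_assoc b b c, h2, zero_mul, smul_zero, neg_zero, zero_sub,
      ← neg_smul, ← mul_assoc]
  have g2c : b * a ^ 2 = -(a * b * a) := by
    rw [h3', sub_mul, neg_mul, smul_mul_assoc, mul_assoc c c a, h5,
      mul_zero, smul_zero, neg_zero, zero_sub, mul_assoc, ← pow_two, neg_neg]
  -- group 3
  have t7 : b * (c * c) + c * (b * c) = 0 := by
    apply hεz
    have h := congrArg (· * c) h1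
    simp only [add_mul, zero_mul, smul_mul_assoc, mul_assoc] at h
    rw [h4, mul_zero, zero_add, ← smul_add] at h
    exact h
  have t8 : c * (b * c) + c * (c * b) = 0 := by
    apply hεz
    have h := congrArg (c * ·) h1
    simp only [mul_add, mul_zero, mul_smul_comm] at h
    rw [← mul_assoc c a a, h5, zero_mul, zero_add, ← smul_add] at h
    exact h
  have g3a : b * c ^ 2 = -(c * b * c) := by
    rw [pow_two, mul_assoc, eq_neg_of_add_eq_zero_left t7]
  have g3b : -(c * b * c) = c ^ 2 * b := by
    rw [pow_two, mul_assoc, mul_assoc]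
    exact (eq_neg_of_add_eq_zero_right t8).symm
  have g3c : c ^ 2 * b = (l * -ε) • (b * a * b) := by
    rw [← g3b, ← g3a, mul_assoc b a b, m3, smul_neg, smul_smul, pow_two]
    have : l * -ε * (l * ε) = -1 := by linear_combination (-(l*l) : K) * hε - hl
    rw [this, neg_smul, one_smul, neg_neg]
  exact ⟨⟨g1a, g1b, g1c⟩, ⟨g2a, g2b, g2c⟩, ⟨g3a, g3b, g3c⟩⟩

/-- Degree-3 consequences of the defining relations. -/
theorem nicholsN_degree_three_relations {K : Type*} [Field K] [IsAlgClosed K] [CharZero K]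
    (l : K) (hl : l = 1 ∨ l = -1) (p : ℕ) (hp : p ≤ 1) :
    letI A := RingQuot (NicholsNRel K l ((-1 : K) ^ p))
    letI w : Fin 3 → A :=
      fun i => RingQuot.mkRingHom (NicholsNRel K l ((-1 : K) ^ p)) (FreeAlgebra.ι K i)
    (w 0 ^ 3 = ((-1 : K) ^ (p + 1)) • (w 0 * w 1 * w 2) ∧
     ((-1 : K) ^ (p + 1)) • (w 0 * w 1 * w 2) = ((-1 : K) ^ (p + 1)) • (w 2 * w 1 * w 0) ∧
     ((-1 : K) ^ (p + 1)) • (w 2 * w 1 * w 0) = l • (w 2 ^ 3)) ∧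
    (w 0 ^ 2 * w 1 = ((-1 : K) ^ (p + 1)) • (w 1 * w 2 * w 1) ∧
     ((-1 : K) ^ (p + 1)) • (w 1 * w 2 * w 1) = w 1 * w 0 ^ 2 ∧
     w 1 * w 0 ^ 2 = -(w 0 * w 1 * w 0)) ∧
    (w 1 * w 2 ^ 2 = -(w 2 * w 1 * w 2) ∧
     -(w 2 * w 1 * w 2) = w 2 ^ 2 * w 1 ∧
     w 2 ^ 2 * w 1 = (l * (-1 : K) ^ (p + 1)) • (w 1 * w 0 * w 1)) := by
  have hε : ((-1 : K) ^ p) * ((-1 : K) ^ p) = 1 := by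
    rw [← pow_add]; exact Even.neg_one_pow ⟨p, rfl⟩
  have hl2 : l * l = 1 := by rcases hl with h | h <;> rw [h] <;> ring
  have hc : ((-1 : K) ^ (p + 1)) = -((-1 : K) ^ p) := by rw [pow_succ, mul_neg_one]
  set r := NicholsNRel K l ((-1 : K) ^ p) with hr
  have hw : ∀ x : FreeAlgebra K (Fin 3),
      RingQuot.mkRingHom r x = RingQuot.mkAlgHom K r x := fun x => by
    rw [← RingQuot.mkAlgHom_coe K r]; rfl
  have key := nichols_aux ((-1 : K) ^ p) l hε hl2
      (RingQuot.mkAlgHom K r (FreeAlgebra.ι K 0))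
      (RingQuot.mkAlgHom K r (FreeAlgebra.ι K 1))
      (RingQuot.mkAlgHom K r (FreeAlgebra.ι K 2))
      ?_ ?_ ?_ ?_ ?_
  · show _ ∧ _ ∧ _
    simp only [hc, hw]
    exact key
  · have h := RingQuot.mkAlgHom_rel K (NicholsNRel.r1 (K := K) (l := l) (ε := (-1 : K) ^ p))
    simpa only [map_add, map_mul, map_smul, map_zero] using h
  · have h := RingQuot.mkAlgHom_rel K (NicholsNRel.r2 (K := K) (l := l) (ε := (-1 : K) ^ p))
    simpa only [map_mul, map_zero] using h
  · have h := RingQuot.mkAlgHom_rel K (NicholsNRel.r3 (K := K) (l := l) (ε := (-1 : K) ^ p))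
    simpa only [map_add, map_mul, map_smul, map_zero] using h
  · have h := RingQuot.mkAlgHom_rel K (NicholsNRel.r4 (K := K) (l := l) (ε := (-1 : K) ^ p))
    simpa only [map_mul, map_zero] using h
  · have h := RingQuot.mkAlgHom_rel K (NicholsNRel.r5 (K := K) (l := l) (ε := (-1 : K) ^ p))
    simpa only [map_mul, map_zero] using h
end

section
/- Let k be an algebraically closed field of characteristic 0 and let A be the k-algebra generated by m₁, m₂, m₃ with relations m₁² = m₂² = m₃² = 0, m₃m₂ = m₁m₃ − m₂m₁, and m₂m₃ = −m₁m₂ + m₃m₁. Then every product of four generators vanishes in A whenever it can be rewritten, using the relations, into a linear combination of monomials each containing a square of a generator; in particular (m₁m₂)² = (m₂m₁)² = 0 and m₁m₂m₁m₂ = 0. -/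
/-- Defining relations of the 12-dimensional Nichols algebra `B(ℒ_{k,pq}^s)`
(n = 1, p = 1, k = 0): `mᵢ² = 0`, `m₃m₂ = m₁m₃ − m₂m₁`, `m₂m₃ = −m₁m₂ + m₃m₁`. -/
inductive NicholsLRel (K : Type*) [Field K] :
    FreeAlgebra K (Fin 3) → FreeAlgebra K (Fin 3) → Prop
  | sq (i : Fin 3) : NicholsLRel K (FreeAlgebra.ι K i * FreeAlgebra.ι K i) 0
  | r1 : NicholsLRel K (FreeAlgebra.ι K 2 * FreeAlgebra.ι K 1)
      (FreeAlgebra.ι K 0 * FreeAlgebra.ι K 2 - FreeAlgebra.ι K 1 * FreeAlgebra.ι K 0)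
  | r2 : NicholsLRel K (FreeAlgebra.ι K 1 * FreeAlgebra.ι K 2)
      (-(FreeAlgebra.ι K 0 * FreeAlgebra.ι K 1) + FreeAlgebra.ι K 2 * FreeAlgebra.ι K 0)

lemma nicholsL_ring_aux {A : Type*} [Ring A] (a b c : A)
    (ha : a * a = 0) (hb : b * b = 0) (hc : c * c = 0)
    (h1 : c * b = a * c - b * a) (h2 : b * c = -(a * b) + c * a) :
    a * b * a * b = 0 ∧ b * a * b * a = 0 := by
  have e : a * b = c * a - b * c := by rw [h2]; abel
  have e' : b * a = a * c - c * b := by rw [h1]; abel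
  have e1 : a * c = c * b + b * a := by rw [h1]; abel
  have e2 : c * a = a * b + b * c := by rw [h2]; abel
  have t1 : c * a * c * a = 0 := by
    have : c * a * c * a = c * (a * c) * a := by noncomm_ring
    rw [this, e1]
    have : c * (c * b + b * a) * a = (c * c) * (b * a) + (c * b) * (a * a) := by noncomm_ring
    rw [this, hc, ha]; simp
  have t2 : c * a * b * c = 0 := by
    have : c * a * b * c = c * (a * b) * c := by noncomm_ring
    rw [this, e]
    have : c * (c * a - b * c) * c = (c * c) * (a * c) - (c * b) * (c * c) := by noncomm_ring
    rw [this, hc]; simp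
  have t3 : b * c * c * a = 0 := by
    have : b * c * c * a = b * (c * c) * a := by noncomm_ring
    rw [this, hc]; simp
  have t4 : b * c * b * c = 0 := by
    have : b * c * b * c = b * (c * b) * c := by noncomm_ring
    rw [this, h1]
    have : b * (a * c - b * a) * c = (b * a) * (c * c) - (b * b) * (a * c) := by noncomm_ring
    rw [this, hc, hb]; simp
  constructor
  · have : a * b * a * b = (a * b) * (a * b) := by noncomm_ring
    rw [this, e]
    have : (c * a - b * c) * (c * a - b * c)
        = c * a * c * a - c * a * b * c - b * c * c * a + b * c * b * c := by noncomm_ring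
    rw [this, t1, t2, t3, t4]; simp
  · have s1 : a * c * a * c = 0 := by
      have : a * c * a * c = a * (c * a) * c := by noncomm_ring
      rw [this, e2]
      have : a * (a * b + b * c) * c = (a * a) * (b * c) + (a * b) * (c * c) := by noncomm_ring
      rw [this, ha, hc]; simp
    have s2 : a * c * c * b = 0 := by
      have : a * c * c * b = a * (c * c) * b := by noncomm_ring
      rw [this, hc]; simp
    have s3 : c * b * a * c = 0 := by
      have : c * b * a * c = c * (b * a) * c := by noncomm_ring
      rw [this, e']
      have : c * (a * c - c * b) * c = (c * a) * (c * c) - (c * c) * (b * c) := by noncomm_ring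
      rw [this, hc]; simp
    have s4 : c * b * c * b = 0 := by
      have : c * b * c * b = c * (b * c) * b := by noncomm_ring
      rw [this, h2]
      have : c * (-(a * b) + c * a) * b = -((c * a) * (b * b)) + (c * c) * (a * b) := by
        noncomm_ring
      rw [this, hb, hc]; simp
    have : b * a * b * a = (b * a) * (b * a) := by noncomm_ring
    rw [this, e']
    have : (a * c - c * b) * (a * c - c * b)
        = a * c * a * c - a * c * c * b - c * b * a * c + c * b * c * b := by noncomm_ring
    rw [this, s1, s2, s3, s4]; simp

/-- In the algebra with the above relations, the stated degree-4 products vanish: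
in particular `(m₁m₂)² = (m₂m₁)² = 0` and `m₁m₂m₁m₂ = 0`. -/
theorem nicholsL_degree_four_vanishing {K : Type*} [Field K] [IsAlgClosed K] [CharZero K] :
    letI A := RingQuot (NicholsLRel K)
    letI m : Fin 3 → A := fun i => RingQuot.mkRingHom (NicholsLRel K) (FreeAlgebra.ι K i)
    (m 0 * m 1) ^ 2 = 0 ∧ (m 1 * m 0) ^ 2 = 0 ∧ m 0 * m 1 * m 0 * m 1 = 0 := by
  beta_reduce
  set m : Fin 3 → RingQuot (NicholsLRel K) :=
    fun i => RingQuot.mkRingHom (NicholsLRel K) (FreeAlgebra.ι K i) with hmdef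
  have hm : ∀ i : Fin 3, m i = RingQuot.mkRingHom (NicholsLRel K) (FreeAlgebra.ι K i) :=
    fun _ => rfl
  show (m 0 * m 1) ^ 2 = 0 ∧ (m 1 * m 0) ^ 2 = 0 ∧ m 0 * m 1 * m 0 * m 1 = 0
  have hsq : ∀ i : Fin 3, m i * m i = 0 := by
    intro i
    rw [hm, ← map_mul]
    rw [RingQuot.mkRingHom_rel (NicholsLRel.sq i), map_zero]
  have h1 : m 2 * m 1 = m 0 * m 2 - m 1 * m 0 := by
    simp only [hm, ← map_mul]
    rw [RingQuot.mkRingHom_rel (NicholsLRel.r1 (K := K)), map_sub, map_mul, map_mul]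
  have h2 : m 1 * m 2 = -(m 0 * m 1) + m 2 * m 0 := by
    simp only [hm, ← map_mul]
    rw [RingQuot.mkRingHom_rel (NicholsLRel.r2 (K := K)), map_add, map_neg, map_mul, map_mul]
  obtain ⟨p, q⟩ := nicholsL_ring_aux (m 0) (m 1) (m 2) (hsq 0) (hsq 1) (hsq 2) h1 h2
  refine ⟨?_, ?_, p⟩
  · simpa [sq, mul_assoc] using p
  · simpa [sq, mul_assoc] using q
end
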